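/- arXiv:1008.4377 — 5 statements merged into one kernel-verified Lean document; each statement's English description precedes it below -/
import Mathlib

section
/- Let l : g → ℝ be smooth, h-invariant under addition (l(ξ+ζ)=l(ξ) for ζ ∈ h) and Ad(H)-invariant. If the left logarithmic derivative u = γ^{-1}γ' of one lift γ of a curve in G/H satisfies the left Euler–Poincaré equation d/dt (δl/δu) = ad*_u (δl/δu), then the left logarithmic derivative u₁ of any other lift γ₁ = γh also satisfies it. Specifically, d/dt(δl/δu₁) − ad*_{u₁}(δl/δu₁) = Ad*_h( d/dt(δl/δu) − ad*_u(δl/δu) ). -/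
/-- Let `l : g → ℝ` be smooth, invariant under addition of elements of `𝔥` and
`Ad(H)`-invariant. If `γ₁ = γh` are two lifts of a curve in `G/H`, with left logarithmic
derivatives `u` and `u₁ = Ad(h⁻¹)u + δˡh`, then (pairing-wise against `ξ ∈ g`)
`d/dt(δl/δu₁) − ad*_{u₁}(δl/δu₁) = Ad*_h ( d/dt(δl/δu) − ad*_u(δl/δu) )`.
In particular if `u` satisfies the left Euler–Poincaré equation, so does `u₁`. -/
theorem stmt8
    {G : Type*} [Group G]
    {g : Type*} [NormedAddCommGroup g] [NormedSpace ℝ g]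
    (H : Subgroup G) (𝔥 : Submodule ℝ g)
    (Ad : G →* (g →L[ℝ] g)) (br : g →L[ℝ] g →L[ℝ] g)
    (hAdbr : ∀ (a : G) (x y : g), Ad a (br x y) = br (Ad a x) (Ad a y))
    (l : g → ℝ) (dl : g → (g →L[ℝ] ℝ))
    (hdl : ∀ x : g, HasFDerivAt l (dl x) x)
    (hinv𝔥 : ∀ ξ : g, ∀ ζ ∈ 𝔥, l (ξ + ζ) = l ξ)
    (hinvH : ∀ a ∈ H, ∀ ξ : g, l (Ad a ξ) = l ξ)
    (h : ℝ → G) (hmemH : ∀ t, h t ∈ H)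
    (w : ℝ → g) (hw : ∀ t, w t ∈ 𝔥)
    -- `w = δˡh`, encoded via `d/dt Ad_{h(t)} = Ad_{h(t)} ∘ ad_{w(t)}`
    (hlogh : ∀ (ξ : g) (t : ℝ),
      HasDerivAt (fun s => Ad (h s) ξ) (Ad (h t) (br (w t) ξ)) t)
    (u u₁ : ℝ → g)
    (hu₁ : ∀ t, u₁ t = Ad ((h t)⁻¹) (u t) + w t)
    (P dP P₁ dP₁ : ℝ → (g →L[ℝ] ℝ))
    (hP : ∀ t, P t = dl (u t)) (hP₁ : ∀ t, P₁ t = dl (u₁ t))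
    (hdP : ∀ t : ℝ, HasDerivAt P (dP t) t)
    (hdP₁ : ∀ t : ℝ, HasDerivAt P₁ (dP₁ t) t) :
    ∀ (t : ℝ) (ξ : g),
      dP₁ t ξ - P₁ t (br (u₁ t) ξ)
        = dP t (Ad (h t) ξ) - P t (br (u t) (Ad (h t) ξ)) := by
  -- Ad a ∘ Ad a⁻¹ = id
  have hAdinv : ∀ (a : G) (x : g), Ad a (Ad a⁻¹ x) = x := by
    intro a x
    have h1 : Ad a * Ad a⁻¹ = 1 := by rw [← map_mul, mul_inv_cancel, map_one]
    calc Ad a (Ad a⁻¹ x) = (Ad a * Ad a⁻¹) x := rfl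
      _ = x := by rw [h1]; rfl
  have hAdinv' : ∀ (a : G) (x : g), Ad a⁻¹ (Ad a x) = x := by
    intro a x
    have h1 : Ad a⁻¹ * Ad a = 1 := by rw [← map_mul, inv_mul_cancel, map_one]
    calc Ad a⁻¹ (Ad a x) = (Ad a⁻¹ * Ad a) x := rfl
      _ = x := by rw [h1]; rfl
  -- dl shifts trivially along 𝔥
  have hdl_shift : ∀ x : g, ∀ ζ ∈ 𝔥, dl (x + ζ) = dl x := by
    intro x ζ hζ
    have h1 : HasFDerivAt (fun y : g => l (y + ζ))
        ((dl (x + ζ)).comp (ContinuousLinearMap.id ℝ g)) x :=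
      (hdl (x + ζ)).comp x ((hasFDerivAt_id x).add_const ζ)
    have h2 : (fun y : g => l (y + ζ)) = l := by
      funext y; exact hinv𝔥 y ζ hζ
    rw [h2] at h1
    simpa using h1.unique (hdl x)
  -- Ad-invariance of dl
  have hdl_Ad : ∀ a ∈ H, ∀ x ξ : g, dl (Ad a x) (Ad a ξ) = dl x ξ := by
    intro a _ x ξ
    have h1 : HasFDerivAt (fun y : g => l (Ad a y))
        ((dl (Ad a x)).comp (Ad a)) x :=
      (hdl (Ad a x)).comp x (Ad a).hasFDerivAt
    have h2 : (fun y : g => l (Ad a y)) = l := by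
      funext y; exact hinvH a ‹a ∈ H› y
    rw [h2] at h1
    have h3 := h1.unique (hdl x)
    calc dl (Ad a x) (Ad a ξ) = ((dl (Ad a x)).comp (Ad a)) ξ := rfl
      _ = dl x ξ := by rw [h3]
  -- key: P₁ t η = P t (Ad (h t) η)
  have hP₁P : ∀ (t : ℝ) (η : g), P₁ t η = P t (Ad (h t) η) := by
    intro t η
    rw [hP₁ t, hP t, hu₁ t, hdl_shift _ (w t) (hw t)]
    have := hdl_Ad ((h t)⁻¹) (H.inv_mem (hmemH t)) (u t) (Ad (h t) η)
    rw [hAdinv'] at this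
    exact this
  intro t ξ
  -- derivative of s ↦ P₁ s ξ computed two ways
  have hD1 : HasDerivAt (fun s => P₁ s ξ) (dP₁ t ξ) t := by
    have := (hdP₁ t).clm_apply (hasDerivAt_const t ξ)
    simpa using this
  have hD2 : HasDerivAt (fun s => P s (Ad (h s) ξ))
      (dP t (Ad (h t) ξ) + P t (Ad (h t) (br (w t) ξ))) t :=
    (hdP t).clm_apply (hlogh ξ t)
  have heq : (fun s => P₁ s ξ) = (fun s => P s (Ad (h s) ξ)) := by
    funext s; exact hP₁P s ξ
  rw [heq] at hD1
  have hdeq : dP₁ t ξ = dP t (Ad (h t) ξ) + P t (Ad (h t) (br (w t) ξ)) :=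
    hD1.unique hD2
  -- compute P₁ t (br (u₁ t) ξ)
  have hterm : P₁ t (br (u₁ t) ξ)
      = P t (br (u t) (Ad (h t) ξ)) + P t (Ad (h t) (br (w t) ξ)) := by
    rw [hP₁P t, hAdbr, hu₁ t, map_add, hAdinv]
    simp [ContinuousLinearMap.add_apply, hAdbr]
  rw [hdeq, hterm]
  ring
end

section
/- With l : g → ℝ h-invariant and Ad(H)-invariant as above, the quantity Ad*_{γ(t)^{-1}} (δl/δu)(t) is independent of the choice of lift γ of a curve in G/H: if γ₁ = γh then Ad*_{γ₁^{-1}}(δl/δu₁) = Ad*_{γ^{-1}}(δl/δu). -/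
/-!
Differentiating the two invariances of `l` shows that `δl/δu` is unchanged by a shift of `u`
by an element of `𝔥`, and is `Ad`-equivariant for `Ad(H)`:
`δl/δu (Ad a x) ∘ Ad a = δl/δu x`. Since `Ad*` is a right action,
`Ad*_{(γh)⁻¹} = Ad*_{γ⁻¹} ∘ Ad*_{h⁻¹}`, and the two facts cancel the `h`.
-/

section InvariantDerivative

variable {𝕜 E F : Type*} [NontriviallyNormedField 𝕜]
  [NormedAddCommGroup E] [NormedSpace 𝕜 E] [NormedAddCommGroup F] [NormedSpace 𝕜 F]
  {f : E → F} {f' f'' : E →L[𝕜] F} {x : E}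

theorem HasFDerivAt.eq_of_forall_add_const_eq {ζ : E} (hinv : ∀ y, f (y + ζ) = f y)
    (hshift : HasFDerivAt f f' (x + ζ)) (hx : HasFDerivAt f f'' x) : f' = f'' := by
  have hcomp : HasFDerivAt (fun y => f (y + ζ)) f' x := by
    simpa [Function.comp_def] using hshift.comp x ((hasFDerivAt_id x).add_const ζ)
  simp only [hinv] at hcomp
  exact hcomp.unique hx

theorem HasFDerivAt.comp_eq_of_forall_apply_eq {A : E →L[𝕜] E} (hinv : ∀ y, f (A y) = f y)
    (hA : HasFDerivAt f f' (A x)) (hx : HasFDerivAt f f'' x) : f'.comp A = f'' := by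
  have hcomp : HasFDerivAt (fun y => f (A y)) (f'.comp A) x := hA.comp x A.hasFDerivAt
  simp only [hinv] at hcomp
  exact hcomp.unique hx

end InvariantDerivative

/-- With `l : g → ℝ` `𝔥`-invariant under addition and `Ad(H)`-invariant, the quantity
`Ad*_{γ(t)⁻¹} (δl/δu)(t)` is independent of the choice of lift of a curve in `G/H`:
if `γ₁ = γh`, with left logarithmic derivatives `u` and `u₁ = Ad(h⁻¹)u + δˡh`, then
`Ad*_{γ₁⁻¹}(δl/δu₁) = Ad*_{γ⁻¹}(δl/δu)` (stated pairing-wise). -/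
theorem stmt9
    {G : Type*} [Group G]
    {g : Type*} [NormedAddCommGroup g] [NormedSpace ℝ g]
    (H : Subgroup G) (𝔥 : Submodule ℝ g)
    (Ad : G →* (g →L[ℝ] g))
    (l : g → ℝ) (dl : g → (g →L[ℝ] ℝ))
    (hdl : ∀ x : g, HasFDerivAt l (dl x) x)
    (hinv𝔥 : ∀ ξ : g, ∀ ζ ∈ 𝔥, l (ξ + ζ) = l ξ)
    (hinvH : ∀ a ∈ H, ∀ ξ : g, l (Ad a ξ) = l ξ)
    (γ h : ℝ → G) (hmemH : ∀ t, h t ∈ H)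
    (w : ℝ → g) (hw : ∀ t, w t ∈ 𝔥)
    (u u₁ : ℝ → g)
    (hu₁ : ∀ t, u₁ t = Ad ((h t)⁻¹) (u t) + w t) :
    ∀ (t : ℝ) (ξ : g),
      dl (u₁ t) (Ad ((γ t * h t)⁻¹) ξ) = dl (u t) (Ad ((γ t)⁻¹) ξ) := by
  intro t ξ
  have hshift : dl (Ad (h t)⁻¹ (u t) + w t) = dl (Ad (h t)⁻¹ (u t)) :=
    (hdl _).eq_of_forall_add_const_eq (fun y => hinv𝔥 y _ (hw t)) (hdl _)
  have hequiv : (dl (Ad (h t)⁻¹ (u t))).comp (Ad (h t)⁻¹) = dl (u t) :=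
    (hdl _).comp_eq_of_forall_apply_eq (hinvH _ (inv_mem (hmemH t))) (hdl _)
  rw [hu₁ t, hshift, mul_inv_rev, map_mul, ← hequiv]
  rfl
end

section
/- If u(t) solves the Camassa–Holm equation in the form ∂_t m = −u m' − 2 u' m with m = u − u'', and γ(t) is a curve of circle diffeomorphisms with ∂_t γ = u ∘ γ, then (m ∘ γ)(γ')² is constant in time (γ' denotes ∂_x γ). -/
open Function
open scoped ContDiff

noncomputable def Dx (f : ℝ → ℝ → ℝ) : ℝ → ℝ → ℝ :=
  fun t x => fderiv ℝ (uncurry f) (t, x) (0, 1)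

noncomputable def Dt (f : ℝ → ℝ → ℝ) : ℝ → ℝ → ℝ :=
  fun t x => fderiv ℝ (uncurry f) (t, x) (1, 0)

lemma contDiff_Dx {f : ℝ → ℝ → ℝ} (hf : ContDiff ℝ ∞ (uncurry f)) :
    ContDiff ℝ ∞ (uncurry (Dx f)) := by
  have h1 : ContDiff ℝ ∞ (fderiv ℝ (uncurry f)) :=
    hf.fderiv_right (le_refl _)
  exact (ContinuousLinearMap.apply ℝ ℝ ((0:ℝ), (1:ℝ))).contDiff.comp h1

lemma contDiff_Dt {f : ℝ → ℝ → ℝ} (hf : ContDiff ℝ ∞ (uncurry f)) :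
    ContDiff ℝ ∞ (uncurry (Dt f)) := by
  have h1 : ContDiff ℝ ∞ (fderiv ℝ (uncurry f)) :=
    hf.fderiv_right (le_refl _)
  exact (ContinuousLinearMap.apply ℝ ℝ ((1:ℝ), (0:ℝ))).contDiff.comp h1

lemma hasDerivAt_slice_x {f : ℝ → ℝ → ℝ} (hf : ContDiff ℝ ∞ (uncurry f)) (t x : ℝ) :
    HasDerivAt (f t) (Dx f t x) x := by
  have hF : HasFDerivAt (uncurry f) (fderiv ℝ (uncurry f) (t, x)) (t, x) :=
    (hf.differentiable (by norm_num) (t, x)).hasFDerivAt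
  have hc : HasDerivAt (fun y : ℝ => ((t, y) : ℝ × ℝ)) ((0 : ℝ), (1 : ℝ)) x :=
    HasDerivAt.prodMk (hasDerivAt_const x t) (hasDerivAt_id x)
  exact hF.comp_hasDerivAt x hc

lemma hasDerivAt_slice_t {f : ℝ → ℝ → ℝ} (hf : ContDiff ℝ ∞ (uncurry f)) (t x : ℝ) :
    HasDerivAt (fun s => f s x) (Dt f t x) t := by
  have hF : HasFDerivAt (uncurry f) (fderiv ℝ (uncurry f) (t, x)) (t, x) :=
    (hf.differentiable (by norm_num) (t, x)).hasFDerivAt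
  have hc : HasDerivAt (fun s : ℝ => ((s, x) : ℝ × ℝ)) ((1 : ℝ), (0 : ℝ)) t :=
    HasDerivAt.prodMk (hasDerivAt_id t) (hasDerivAt_const t x)
  exact hF.comp_hasDerivAt t hc

/-- Clairaut for smooth `f : ℝ×ℝ → ℝ`. -/
lemma Dt_Dx_eq_Dx_Dt {f : ℝ → ℝ → ℝ} (hf : ContDiff ℝ ∞ (uncurry f)) (t x : ℝ) :
    Dt (Dx f) t x = Dx (Dt f) t x := by
  set F := uncurry f
  have hdiff : ∀ p : ℝ × ℝ, HasFDerivAt F (fderiv ℝ F p) p :=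
    fun p => (hf.differentiable (by norm_num) p).hasFDerivAt
  have h1 : ContDiff ℝ ∞ (fderiv ℝ F) := hf.fderiv_right (le_refl _)
  have h2 : ∀ p : ℝ × ℝ, HasFDerivAt (fderiv ℝ F) (fderiv ℝ (fderiv ℝ F) p) p :=
    fun p => (h1.differentiable (by norm_num) p).hasFDerivAt
  have hsymm : ∀ v w : ℝ × ℝ,
      fderiv ℝ (fderiv ℝ F) (t, x) v w = fderiv ℝ (fderiv ℝ F) (t, x) w v :=
    second_derivative_symmetric hdiff (h2 (t, x))
  -- compute Dt (Dx f) t x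
  have e1 : ∀ (v w : ℝ × ℝ) (p : ℝ × ℝ),
      HasFDerivAt (fun q : ℝ × ℝ => fderiv ℝ F q v)
        ((ContinuousLinearMap.apply ℝ ℝ v).comp (fderiv ℝ (fderiv ℝ F) p)) p := by
    intro v w p
    exact (ContinuousLinearMap.apply ℝ ℝ v).hasFDerivAt.comp p (h2 p)
  have eDx : uncurry (Dx f) = fun q : ℝ × ℝ => fderiv ℝ F q (0, 1) := rfl
  have eDt : uncurry (Dt f) = fun q : ℝ × ℝ => fderiv ℝ F q (1, 0) := rfl
  have c1 : Dt (Dx f) t x = fderiv ℝ (fderiv ℝ F) (t, x) (1, 0) (0, 1) := by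
    show fderiv ℝ (uncurry (Dx f)) (t, x) (1, 0) = _
    rw [eDx, ((e1 (0,1) (0,1) (t,x)).fderiv)]
    rfl
  have c2 : Dx (Dt f) t x = fderiv ℝ (fderiv ℝ F) (t, x) (0, 1) (1, 0) := by
    show fderiv ℝ (uncurry (Dt f)) (t, x) (0, 1) = _
    rw [eDt, ((e1 (1,0) (1,0) (t,x)).fderiv)]
    rfl
  rw [c1, c2, hsymm]

/-- chain rule along a curve. -/
lemma hasDerivAt_comp_curve {f : ℝ → ℝ → ℝ} (hf : ContDiff ℝ ∞ (uncurry f))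
    {c : ℝ → ℝ} {c' t : ℝ} (hc : HasDerivAt c c' t) :
    HasDerivAt (fun s => f s (c s)) (Dt f t (c t) + c' * Dx f t (c t)) t := by
  have hF : HasFDerivAt (uncurry f) (fderiv ℝ (uncurry f) (t, c t)) (t, c t) :=
    (hf.differentiable (by norm_num) (t, c t)).hasFDerivAt
  have hcc : HasDerivAt (fun s : ℝ => ((s, c s) : ℝ × ℝ)) ((1 : ℝ), c') t :=
    HasDerivAt.prodMk (hasDerivAt_id t) hc
  have : HasDerivAt (fun s => f s (c s)) (fderiv ℝ (uncurry f) (t, c t) ((1 : ℝ), c')) t :=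
    by have h := hF.comp_hasDerivAt t hcc; exact h
  convert this using 1
  have : ((1:ℝ), c') = ((1:ℝ), (0:ℝ)) + c' • ((0:ℝ), (1:ℝ)) := by
    simp [Prod.ext_iff]
  rw [this, map_add, map_smul]
  simp [Dt, Dx]

/-- If `u` solves the Camassa–Holm equation in the form `∂_t m = −u m' − 2 u' m` with
`m = u − u''`, and `γ` is the flow of `u` (a curve of circle diffeomorphisms, lifted to
`ℝ` with `γ(t,x+1) = γ(t,x)+1`), then `(m ∘ γ)(γ')²` is constant in time. -/
theorem stmt15 (u m : ℝ → ℝ → ℝ) (γ : ℝ → ℝ → ℝ)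
    (hu : ContDiff ℝ (⊤ : ℕ∞) (Function.uncurry u))
    (hγ : ContDiff ℝ (⊤ : ℕ∞) (Function.uncurry γ))
    (huper : ∀ t x, u t (x + 1) = u t x)
    (hγper : ∀ t x, γ t (x + 1) = γ t x + 1)
    (hmdef : ∀ t x, m t x = u t x - deriv (deriv (u t)) x)
    (hPDE : ∀ t x, deriv (fun s => m s x) t
      = -(u t x * deriv (m t) x + 2 * deriv (u t) x * m t x))
    (hflow : ∀ t x, HasDerivAt (fun s => γ s x) (u t (γ t x)) t)
    (hinit : ∀ x, γ 0 x = x) :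
    ∀ t x, m t (γ t x) * (deriv (γ t) x) ^ 2 = m 0 x := by
  have hu' : ContDiff ℝ ∞ (uncurry u) := hu.of_le (by simp)
  have hγ' : ContDiff ℝ ∞ (uncurry γ) := hγ.of_le (by simp)
  -- deriv of slices equal Dx
  have hdu : ∀ t x, deriv (u t) x = Dx u t x := fun t x =>
    (hasDerivAt_slice_x hu' t x).deriv
  have hdγ : ∀ t x, deriv (γ t) x = Dx γ t x := fun t x =>
    (hasDerivAt_slice_x hγ' t x).deriv
  -- m is smooth
  have hm_eq : ∀ t x, m t x = u t x - Dx (Dx u) t x := by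
    intro t x
    rw [hmdef t x]
    congr 1
    have h1 : deriv (u t) = fun y => Dx u t y := funext fun y => hdu t y
    rw [h1]
    exact (hasDerivAt_slice_x (contDiff_Dx hu') t x).deriv
  have hM : ContDiff ℝ ∞ (uncurry m) := by
    have : uncurry m = fun p : ℝ × ℝ => uncurry u p - uncurry (Dx (Dx u)) p := by
      funext p
      exact hm_eq p.1 p.2
    rw [this]
    exact hu'.sub (contDiff_Dx (contDiff_Dx hu'))
  have hdm : ∀ t x, deriv (m t) x = Dx m t x := fun t x =>
    (hasDerivAt_slice_x hM t x).deriv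
  -- Dt γ = u ∘ γ
  have hDtγ : ∀ t x, Dt γ t x = u t (γ t x) := by
    intro t x
    have h1 := hasDerivAt_slice_t hγ' t x
    exact h1.unique (hflow t x)
  intro t x
  set F : ℝ → ℝ := fun s => m s (γ s x) * (Dx γ s x) ^ 2 with hF_def
  have key : ∀ s, HasDerivAt F 0 s := by
    intro s
    set y := γ s x with hy
    set g := Dx γ s x with hg
    set ux := Dx u s y with hux
    set mm := m s y with hmm
    -- derivative of s ↦ m s (γ s x)
    have h1 : HasDerivAt (fun r => m r (γ r x)) (Dt m s y + u s y * Dx m s y) s :=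
      hasDerivAt_comp_curve hM (hflow s x)
    have hDtm : Dt m s y = -(u s y * Dx m s y + 2 * ux * mm) := by
      have := (hasDerivAt_slice_t hM s y).deriv
      rw [← this] at *
      rw [hPDE s y] at this ⊢
      rw [hdm s y, hdu s y] at this ⊢
    have h1' : HasDerivAt (fun r => m r (γ r x)) (-(2 * ux * mm)) s := by
      convert h1 using 1
      rw [hDtm]; ring
    -- derivative of s ↦ Dx γ s x
    have h2 : HasDerivAt (fun r => Dx γ r x) (Dt (Dx γ) s x) s :=
      hasDerivAt_slice_t (contDiff_Dx hγ') s x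
    have hmix : Dt (Dx γ) s x = ux * g := by
      rw [Dt_Dx_eq_Dx_Dt hγ' s x]
      have hslice : (Dt γ) s = fun z => u s (γ s z) := funext fun z => hDtγ s z
      have hchain : HasDerivAt (fun z => u s (γ s z)) (ux * g) x := by
        have ha := hasDerivAt_slice_x hu' s (γ s x)
        have hb := hasDerivAt_slice_x hγ' s x
        exact HasDerivAt.comp x ha hb
      have hc := hasDerivAt_slice_x (contDiff_Dt hγ') s x
      rw [hslice] at hc
      exact hc.unique hchain
    have h2' : HasDerivAt (fun r => Dx γ r x) (ux * g) s := hmix ▸ h2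
    have h3 : HasDerivAt F ((-(2 * ux * mm)) * g ^ 2 + mm * (2 * g ^ 1 * (ux * g))) s :=
      h1'.mul (h2'.pow 2)
    convert h3 using 1
    ring
  have hconst : F t = F 0 :=
    is_const_of_deriv_eq_zero (fun s => (key s).differentiableAt)
      (fun s => (key s).deriv) t 0
  have hγ0 : Dx γ 0 x = 1 := by
    rw [← hdγ 0 x]
    have : γ 0 = fun z => z := funext hinit
    rw [this]
    simp
  have : F 0 = m 0 x := by
    simp only [hF_def, hγ0, hinit x, one_pow, mul_one]
  rw [hdγ t x]
  calc m t (γ t x) * (Dx γ t x) ^ 2 = F t := rfl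
    _ = F 0 := hconst
    _ = m 0 x := this
end

section
/- If u(t) solves ∂_t m = −u m' − 3 u' m with m = u − u'' (the Degasperis–Procesi equation) and γ satisfies ∂_t γ = u ∘ γ, γ(0) = id, then (m ∘ γ)(γ')³ is constant in time. -/
open Function

/-- Derivative of a two-variable function along a curve `s ↦ (s, c s)`. -/
lemma curveDeriv {E : Type*} [NormedAddCommGroup E] [NormedSpace ℝ E]
    {F : ℝ × ℝ → E} (hF : Differentiable ℝ F) {c : ℝ → ℝ} {c' t : ℝ}
    (hc : HasDerivAt c c' t) :
    HasDerivAt (fun s => F (s, c s)) (fderiv ℝ F (t, c t) (1, c')) t :=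
  (hF (t, c t)).hasFDerivAt.comp_hasDerivAt t ((hasDerivAt_id t).prodMk hc)

/-- Derivative in the second variable. -/
lemma secondDeriv {E : Type*} [NormedAddCommGroup E] [NormedSpace ℝ E]
    {F : ℝ × ℝ → E} (hF : Differentiable ℝ F) (t x : ℝ) :
    HasDerivAt (fun y => F (t, y)) (fderiv ℝ F (t, x) (0, 1)) x :=
  (hF (t, x)).hasFDerivAt.comp_hasDerivAt x ((hasDerivAt_const x t).prodMk (hasDerivAt_id x))

/-- Derivative in the first variable. -/
lemma firstDeriv {E : Type*} [NormedAddCommGroup E] [NormedSpace ℝ E]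
    {F : ℝ × ℝ → E} (hF : Differentiable ℝ F) (t x : ℝ) :
    HasDerivAt (fun s => F (s, x)) (fderiv ℝ F (t, x) (1, 0)) t := by
  have := curveDeriv hF (hasDerivAt_const t x)
  simpa using this

/-- If `u` solves the Degasperis–Procesi equation in the form `∂_t m = −u m' − 3 u' m`
with `m = u − u''`, and `γ` is the flow of `u` (lifted to `ℝ` with
`γ(t,x+1) = γ(t,x)+1`, `γ(0) = id`), then `(m ∘ γ)(γ')³` is constant in time. -/
theorem stmt16 (u m : ℝ → ℝ → ℝ) (γ : ℝ → ℝ → ℝ)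
    (hu : ContDiff ℝ (⊤ : ℕ∞) (Function.uncurry u))
    (hγ : ContDiff ℝ (⊤ : ℕ∞) (Function.uncurry γ))
    (huper : ∀ t x, u t (x + 1) = u t x)
    (hγper : ∀ t x, γ t (x + 1) = γ t x + 1)
    (hmdef : ∀ t x, m t x = u t x - deriv (deriv (u t)) x)
    (hPDE : ∀ t x, deriv (fun s => m s x) t
      = -(u t x * deriv (m t) x + 3 * deriv (u t) x * m t x))
    (hflow : ∀ t x, HasDerivAt (fun s => γ s x) (u t (γ t x)) t)
    (hinit : ∀ x, γ 0 x = x) :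
    ∀ t x, m t (γ t x) * (deriv (γ t) x) ^ 3 = m 0 x := by
  have hud : Differentiable ℝ (uncurry u) := hu.differentiable (by simp)
  have hγd : Differentiable ℝ (uncurry γ) := hγ.differentiable (by simp)
  set Γ := uncurry γ with hΓdef
  set DΓ := fderiv ℝ Γ with hDΓdef
  have hDΓc : ContDiff ℝ (⊤ : ℕ∞) DΓ := hγ.fderiv_right (by simp)
  have hDΓd : Differentiable ℝ DΓ := hDΓc.differentiable (by simp)
  -- m is smooth jointly
  have hw1 : ContDiff ℝ (⊤ : ℕ∞) (fun p : ℝ × ℝ => deriv (u p.1) p.2) := by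
    have : ContDiff ℝ (⊤ : ℕ∞) (fun p : ℝ × ℝ => fderiv ℝ (u p.1) p.2 1) := by
      apply ContDiff.fderiv_apply (f := fun (p : ℝ × ℝ) y => u p.1 y)
        (g := fun p => p.2) (k := fun _ => 1) (m := ((⊤ : ℕ∞) : WithTop ℕ∞)) _ contDiff_snd contDiff_const (by exact_mod_cast le_top)
      exact hu.comp ((contDiff_fst.comp contDiff_fst).prodMk contDiff_snd)
    simpa only [fderiv_apply_one_eq_deriv] using this
  have hw2 : ContDiff ℝ (⊤ : ℕ∞) (fun p : ℝ × ℝ => deriv (deriv (u p.1)) p.2) := by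
    have : ContDiff ℝ (⊤ : ℕ∞) (fun p : ℝ × ℝ => fderiv ℝ (deriv (u p.1)) p.2 1) := by
      apply ContDiff.fderiv_apply (f := fun (p : ℝ × ℝ) y => deriv (u p.1) y)
        (g := fun p => p.2) (k := fun _ => 1) (m := ((⊤ : ℕ∞) : WithTop ℕ∞)) _ contDiff_snd contDiff_const (by exact_mod_cast le_top)
      exact hw1.comp ((contDiff_fst.comp contDiff_fst).prodMk contDiff_snd)
    simpa only [fderiv_apply_one_eq_deriv] using this
  have hM : ContDiff ℝ (⊤ : ℕ∞) (uncurry m) := by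
    have : (uncurry m) = fun p : ℝ × ℝ => u p.1 p.2 - deriv (deriv (u p.1)) p.2 := by
      funext p; exact hmdef p.1 p.2
    rw [this]
    exact hu.sub hw2
  have hMd : Differentiable ℝ (uncurry m) := hM.differentiable (by simp)
  intro t x
  -- deriv (γ s) y = DΓ (s,y) (0,1)
  have K1 : ∀ s y, HasDerivAt (γ s) (DΓ (s, y) (0, 1)) y := fun s y => secondDeriv hγd s y
  have K1' : ∀ s y, deriv (γ s) y = DΓ (s, y) (0, 1) := fun s y => (K1 s y).deriv
  have K2 : ∀ s y, DΓ (s, y) (1, 0) = u s (γ s y) := fun s y =>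
    (firstDeriv hγd s y).unique (hflow s y)
  -- derivative of s ↦ deriv (γ s) x
  have hb : ∀ s, HasDerivAt (fun r => deriv (γ r) x)
      (deriv (u s) (γ s x) * deriv (γ s) x) s := by
    intro s
    have hsymm := second_derivative_symmetric (f := Γ) (f' := DΓ)
      (f'' := fderiv ℝ DΓ (s, x)) (fun y => (hγd y).hasFDerivAt)
      ((hDΓd (s, x)).hasFDerivAt)
    -- t-derivative of s ↦ DΓ (s,x) (0,1)
    have h1 : HasDerivAt (fun r => DΓ (r, x) (0, 1))
        (fderiv ℝ DΓ (s, x) (1, 0) (0, 1)) s := by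
      have := (firstDeriv hDΓd s x).clm_apply (hasDerivAt_const s ((0 : ℝ), (1 : ℝ)))
      simpa using this
    -- x-derivative of y ↦ DΓ (s,y) (1,0)
    have h2 : HasDerivAt (fun y => DΓ (s, y) (1, 0))
        (fderiv ℝ DΓ (s, x) (0, 1) (1, 0)) x := by
      have := (secondDeriv hDΓd s x).clm_apply (hasDerivAt_const x ((1 : ℝ), (0 : ℝ)))
      simpa using this
    -- but y ↦ DΓ (s,y) (1,0) equals y ↦ u s (γ s y)
    have h3 : HasDerivAt (fun y => u s (γ s y))
        (fderiv ℝ DΓ (s, x) (0, 1) (1, 0)) x := by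
      have : (fun y => DΓ (s, y) (1, 0)) = fun y => u s (γ s y) := funext fun y => K2 s y
      rwa [this] at h2
    -- chain rule value
    have hus : HasDerivAt (u s) (deriv (u s) (γ s x)) (γ s x) := by
      have h0 : HasDerivAt (fun y => u s y)
          (fderiv ℝ (uncurry u) (s, γ s x) (0, 1)) (γ s x) := secondDeriv hud s (γ s x)
      exact h0.differentiableAt.hasDerivAt
    have h4 : HasDerivAt (fun y => u s (γ s y))
        (deriv (u s) (γ s x) * deriv (γ s) x) x := by
      have := (hus.comp x (K1 s x))
      rw [K1' s x]; exact this
    have h5 : fderiv ℝ DΓ (s, x) (0, 1) (1, 0)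
        = deriv (u s) (γ s x) * deriv (γ s) x := h3.unique h4
    have h6 : HasDerivAt (fun r => DΓ (r, x) (0, 1))
        (deriv (u s) (γ s x) * deriv (γ s) x) s := by
      rwa [hsymm (1, 0) (0, 1), h5] at h1
    have : (fun r => deriv (γ r) x) = fun r => DΓ (r, x) (0, 1) :=
      funext fun r => K1' r x
    rwa [this]
  -- derivative of s ↦ m s (γ s x)
  have hm : ∀ s, HasDerivAt (fun r => m r (γ r x))
      (-3 * deriv (u s) (γ s x) * m s (γ s x)) s := by
    intro s
    have hc := curveDeriv hMd (hflow s x)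
    have e1 : fderiv ℝ (uncurry m) (s, γ s x) (1, 0) = deriv (fun r => m r (γ s x)) s :=
      ((firstDeriv hMd s (γ s x)).deriv).symm
    have e2 : fderiv ℝ (uncurry m) (s, γ s x) (0, 1) = deriv (m s) (γ s x) :=
      ((secondDeriv hMd s (γ s x)).deriv).symm
    have esplit : ((1 : ℝ), u s (γ s x)) = (1, 0) + u s (γ s x) • ((0 : ℝ), (1 : ℝ)) := by
      simp
    have : fderiv ℝ (uncurry m) (s, γ s x) (1, u s (γ s x))
        = -3 * deriv (u s) (γ s x) * m s (γ s x) := by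
      rw [esplit, map_add, map_smul, e1, e2, hPDE s (γ s x)]
      simp only [smul_eq_mul]
      ring
    rw [this] at hc
    exact hc
  -- the conserved quantity
  set G : ℝ → ℝ := fun s => m s (γ s x) * (deriv (γ s) x) ^ 3 with hGdef
  have hG : ∀ s, HasDerivAt G 0 s := by
    intro s
    have : HasDerivAt (fun r => m r (γ r x) * (deriv (γ r) x) ^ 3) _ s := (hm s).mul ((hb s).pow 3)
    convert this using 1
    ring
  have hconst : G t = G 0 := by
    have hdiff : Differentiable ℝ G := fun s => (hG s).differentiableAt
    have hzero : ∀ s, deriv G s = 0 := fun s => (hG s).deriv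
    exact is_const_of_deriv_eq_zero hdiff hzero t 0
  have hγ0 : γ 0 = id := funext hinit
  have : G 0 = m 0 x := by
    rw [hGdef]
    simp [hγ0]
  rw [← this]
  exact hconst
end

section
/- More generally, if m(t,x) satisfies ∂_t m = −u m' − λ u' m on S¹ and γ is the flow of u (∂_t γ = u∘γ, γ(0)=id), then (m ∘ γ)(γ')^λ is constant in time, for any real λ. -/
open Function

private lemma partial_x {f : ℝ → ℝ → ℝ} (hf : ContDiff ℝ (⊤ : ℕ∞) (uncurry f)) (t x : ℝ) :
    HasDerivAt (f t) (fderiv ℝ (uncurry f) (t, x) (0, 1)) x := by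
  have h := (hf.differentiable (by simp) (t, x)).hasFDerivAt
  have hc : HasDerivAt (fun y : ℝ => ((t : ℝ), y)) ((0 : ℝ), (1 : ℝ)) x :=
    (hasDerivAt_const x t).prodMk (hasDerivAt_id x)
  exact h.comp_hasDerivAt x hc

private lemma partial_t {f : ℝ → ℝ → ℝ} (hf : ContDiff ℝ (⊤ : ℕ∞) (uncurry f)) (t x : ℝ) :
    HasDerivAt (fun s => f s x) (fderiv ℝ (uncurry f) (t, x) (1, 0)) t := by
  have h := (hf.differentiable (by simp) (t, x)).hasFDerivAt
  have hc : HasDerivAt (fun s : ℝ => (s, (x : ℝ))) ((1 : ℝ), (0 : ℝ)) t :=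
    (hasDerivAt_id t).prodMk (hasDerivAt_const t x)
  exact h.comp_hasDerivAt t hc

private lemma cross {f : ℝ → ℝ → ℝ} (hf : ContDiff ℝ (⊤ : ℕ∞) (uncurry f)) (t x : ℝ) :
    HasDerivAt (fun s => deriv (f s) x) (deriv (fun y => deriv (fun s => f s y) t) x) t := by
  set G := uncurry f with hG
  have hdiff : ∀ p : ℝ × ℝ, HasFDerivAt G (fderiv ℝ G p) p :=
    fun p => (hf.differentiable (by simp) p).hasFDerivAt
  have hG1 : ContDiff ℝ (⊤ : ℕ∞) (fderiv ℝ G) := hf.fderiv_right (by simp)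
  have hG'' : HasFDerivAt (fderiv ℝ G) (fderiv ℝ (fderiv ℝ G) (t, x)) (t, x) :=
    (hG1.differentiable (by simp) (t, x)).hasFDerivAt
  set f'' := fderiv ℝ (fderiv ℝ G) (t, x) with hf''
  have hP : HasFDerivAt (fun p : ℝ × ℝ => fderiv ℝ G p ((0 : ℝ), (1 : ℝ)))
      ((ContinuousLinearMap.apply ℝ ℝ ((0 : ℝ), (1 : ℝ))).comp f'') (t, x) :=
    (ContinuousLinearMap.apply ℝ ℝ ((0 : ℝ), (1 : ℝ))).hasFDerivAt.comp (t, x) hG''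
  have hcT : HasDerivAt (fun s : ℝ => (s, (x : ℝ))) ((1 : ℝ), (0 : ℝ)) t :=
    (hasDerivAt_id t).prodMk (hasDerivAt_const t x)
  have h1 : HasDerivAt (fun s => fderiv ℝ G (s, x) ((0 : ℝ), (1 : ℝ)))
      (f'' (1, 0) (0, 1)) t := by have := hP.comp_hasDerivAt t hcT; exact this
  have hEq1 : (fun s => deriv (f s) x) = fun s => fderiv ℝ G (s, x) ((0 : ℝ), (1 : ℝ)) :=
    funext fun s => (partial_x hf s x).deriv
  have hsym : f'' (1, 0) (0, 1) = f'' (0, 1) (1, 0) :=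
    second_derivative_symmetric hdiff hG'' _ _
  have hQ : HasFDerivAt (fun p : ℝ × ℝ => fderiv ℝ G p ((1 : ℝ), (0 : ℝ)))
      ((ContinuousLinearMap.apply ℝ ℝ ((1 : ℝ), (0 : ℝ))).comp f'') (t, x) :=
    (ContinuousLinearMap.apply ℝ ℝ ((1 : ℝ), (0 : ℝ))).hasFDerivAt.comp (t, x) hG''
  have hcX : HasDerivAt (fun y : ℝ => ((t : ℝ), y)) ((0 : ℝ), (1 : ℝ)) x :=
    (hasDerivAt_const x t).prodMk (hasDerivAt_id x)
  have h3 : HasDerivAt (fun y => fderiv ℝ G (t, y) ((1 : ℝ), (0 : ℝ)))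
      (f'' (0, 1) (1, 0)) x := hQ.comp_hasDerivAt x hcX
  have hEq3 : (fun y => deriv (fun s => f s y) t)
      = fun y => fderiv ℝ G (t, y) ((1 : ℝ), (0 : ℝ)) :=
    funext fun y => (partial_t hf t y).deriv
  have h4 : deriv (fun y => deriv (fun s => f s y) t) x = f'' (0, 1) (1, 0) := by
    rw [hEq3]; exact h3.deriv
  rw [hEq1, h4, ← hsym]
  exact h1

/-- If `m` satisfies `∂_t m = −u m' − λ u' m` on the circle and `γ` is the flow of `u`
(with `∂_x γ > 0`, `γ(0) = id`), then `(m ∘ γ)(γ')^λ` is constant in time, for any real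
`λ` (real exponent via `rpow`). -/
theorem stmt17 (l : ℝ) (u m : ℝ → ℝ → ℝ) (γ : ℝ → ℝ → ℝ)
    (hu : ContDiff ℝ (⊤ : ℕ∞) (Function.uncurry u))
    (hm : ContDiff ℝ (⊤ : ℕ∞) (Function.uncurry m))
    (hγ : ContDiff ℝ (⊤ : ℕ∞) (Function.uncurry γ))
    (huper : ∀ t x, u t (x + 1) = u t x)
    (hmper : ∀ t x, m t (x + 1) = m t x)
    (hγper : ∀ t x, γ t (x + 1) = γ t x + 1)
    (hPDE : ∀ t x, deriv (fun s => m s x) t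
      = -(u t x * deriv (m t) x + l * deriv (u t) x * m t x))
    (hflow : ∀ t x, HasDerivAt (fun s => γ s x) (u t (γ t x)) t)
    (hpos : ∀ t x, 0 < deriv (γ t) x)
    (hinit : ∀ x, γ 0 x = x) :
    ∀ t x, m t (γ t x) * (deriv (γ t) x) ^ l = m 0 x := by
  intro t x
  -- pointwise HasDerivAt for partials with `deriv` values
  have hux : ∀ s y, HasDerivAt (u s) (deriv (u s) y) y := fun s y =>
    (partial_x hu s y).deriv ▸ partial_x hu s y
  have hγx : ∀ s y, HasDerivAt (γ s) (deriv (γ s) y) y := fun s y =>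
    (partial_x hγ s y).deriv ▸ partial_x hγ s y
  -- Claim 1: derivative of s ↦ ∂ₓγ(s,x)
  have claim1 : ∀ s, HasDerivAt (fun r => deriv (γ r) x)
      (deriv (u s) (γ s x) * deriv (γ s) x) s := by
    intro s
    have h := cross hγ s x
    have hEq : (fun y => deriv (fun r => γ r y) s) = fun y => u s (γ s y) :=
      funext fun y => (hflow s y).deriv
    have h2 : deriv (fun y => deriv (fun r => γ r y) s) x
        = deriv (u s) (γ s x) * deriv (γ s) x := by
      rw [hEq]
      exact (((hux s (γ s x)).comp x (hγx s x))).deriv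
    rwa [h2] at h
  -- Claim 2: derivative of s ↦ m(s, γ(s,x))
  have claim2 : ∀ s, HasDerivAt (fun r => m r (γ r x))
      (-(l * deriv (u s) (γ s x) * m s (γ s x))) s := by
    intro s
    have hc : HasDerivAt (fun r => (r, γ r x)) ((1 : ℝ), u s (γ s x)) s :=
      (hasDerivAt_id s).prodMk (hflow s x)
    have hM := (hm.differentiable (by simp) (s, γ s x)).hasFDerivAt
    have hcomp : HasDerivAt (fun r => m r (γ r x))
        (fderiv ℝ (Function.uncurry m) (s, γ s x) (1, u s (γ s x))) s :=
      by have := hM.comp_hasDerivAt s hc; exact this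
    have hsplit : ((1 : ℝ), u s (γ s x))
        = ((1 : ℝ), (0 : ℝ)) + u s (γ s x) • ((0 : ℝ), (1 : ℝ)) := by
      simp [Prod.ext_iff]
    have ht' : fderiv ℝ (Function.uncurry m) (s, γ s x) (1, 0)
        = deriv (fun r => m r (γ s x)) s := ((partial_t hm s (γ s x)).deriv).symm
    have hx' : fderiv ℝ (Function.uncurry m) (s, γ s x) (0, 1)
        = deriv (m s) (γ s x) := ((partial_x hm s (γ s x)).deriv).symm
    have hval : fderiv ℝ (Function.uncurry m) (s, γ s x) (1, u s (γ s x))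
        = -(l * deriv (u s) (γ s x) * m s (γ s x)) := by
      rw [hsplit, map_add, map_smul, smul_eq_mul, ht', hx', hPDE s (γ s x)]
      ring
    rwa [hval] at hcomp
  -- F has zero derivative
  have hF : ∀ s, HasDerivAt (fun r => m r (γ r x) * (deriv (γ r) x) ^ l) 0 s := by
    intro s
    have hg := claim1 s
    have hne : deriv (γ s) x ≠ 0 := ne_of_gt (hpos s x)
    have hrpow : HasDerivAt (fun r => (deriv (γ r) x) ^ l)
        ((deriv (u s) (γ s x) * deriv (γ s) x) * l * (deriv (γ s) x) ^ (l - 1)) s :=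
      hg.rpow_const (Or.inl hne)
    have hprod := (claim2 s).mul hrpow
    refine hprod.congr_deriv ?_
    rw [Real.rpow_sub_one hne]
    field_simp
    ring
  have hconst : (fun r => m r (γ r x) * (deriv (γ r) x) ^ l) t
      = (fun r => m r (γ r x) * (deriv (γ r) x) ^ l) 0 :=
    is_const_of_deriv_eq_zero (fun s => (hF s).differentiableAt)
      (fun s => (hF s).deriv) t 0
  simp only at hconst
  rw [hconst]
  have hγ0 : γ 0 = fun y => y := funext hinit
  rw [hinit x, hγ0, deriv_id'', Real.one_rpow, mul_one]
end
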